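/- arXiv:1504.05272 — 2 statements merged into one kernel-verified Lean document; each statement's English description precedes it below -/
import Mathlib

section
/- Let L be a positive divisor of M with radical L* > 2 and k a nonnegative integer. Then I_k(L,M) = Σ_{d | L*} μ(d)·d^k·S_k(⌊M/(2d)⌋₀), where μ is the Möbius function, S_k(n) = Σ_{i=1}^n i^k, and ⌊x⌋₀ denotes the greatest integer strictly less than x. -/
/-!
Since `gcd(t, L) = 1` iff `gcd(t, L*) = 1`, Möbius inversion writes the coprimality indicator as
`Σ_{d ∣ L*, d ∣ t} μ(d)`. Exchanging the sums, the multiples of `d` in `(0, M/2)` are exactly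
`d s` with `1 ≤ s ≤ ⌊M/(2d)⌋₀`, and they contribute `d^k S_k(⌊M/(2d)⌋₀)`.
-/

open Finset

/-- `Ik k L M = Σ t^k` over integers `0 < t < M/2` with `gcd(t, L) = 1`. -/
def Ik (k L M : ℕ) : ℕ :=
  ∑ t ∈ (Finset.range M).filter (fun t => 0 < t ∧ 2 * t < M ∧ Nat.gcd t L = 1), t ^ k

/-- `Jk k L M = Σ u^k` over integers `0 < u < M/2` with `gcd(u, L) = 1` and `u ≡ -M (mod 3)`. -/
def Jk (k L M : ℕ) : ℕ :=
  ∑ t ∈ (Finset.range M).filter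
    (fun t => 0 < t ∧ 2 * t < M ∧ Nat.gcd t L = 1 ∧ (t + M) % 3 = 0), t ^ k

/-- The radical of `n`: the product of the distinct prime divisors of `n`. -/
def rad (n : ℕ) : ℕ := ∏ p ∈ n.primeFactors, p

/-- Power sum: sum of i^k for i from 1 to n. -/
def Sk (k n : ℕ) : ℕ := ∑ i ∈ Finset.Icc 1 n, i ^ k

/-- The greatest integer strictly less than M / (2 * d). -/
def fl0 (M d : ℕ) : ℕ := if 2 * d ∣ M then M / (2 * d) - 1 else M / (2 * d)

open ArithmeticFunction
open scoped ArithmeticFunction.Moebius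

lemma coprime_rad_iff {t n : ℕ} (hn : n ≠ 0) : t.Coprime (rad n) ↔ t.Coprime n := by
  rw [rad, Nat.coprime_prod_right_iff]
  refine ⟨fun h => Nat.coprime_of_dvd fun p hp hpt hpn => ?_,
    fun h p hp => h.coprime_dvd_right (Nat.dvd_of_mem_primeFactors hp)⟩
  exact (hp.coprime_iff_not_dvd.mp (h p (Nat.mem_primeFactors.mpr ⟨hp, hpn, hn⟩)).symm) hpt

lemma rad_ne_zero (n : ℕ) : rad n ≠ 0 :=
  Finset.prod_ne_zero_iff.mpr fun _ hp => (Nat.prime_of_mem_primeFactors hp).ne_zero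

lemma sum_moebius_filter_dvd {n : ℕ} (hn : n ≠ 0) (t : ℕ) :
    ∑ d ∈ n.divisors with d ∣ t, (μ d : ℤ) = if t.Coprime n then 1 else 0 := by
  have hfilter : {d ∈ n.divisors | d ∣ t} = {d ∈ n.divisors | d ∣ t.gcd n} :=
    filter_congr fun d hd => by rw [Nat.dvd_gcd_iff, and_iff_left (Nat.dvd_of_mem_divisors hd)]
  rw [hfilter, Nat.divisors_filter_dvd_of_dvd hn (Nat.gcd_dvd_right t n), ← coe_mul_zeta_apply,
    moebius_mul_coe_zeta, one_apply]

theorem sum_filter_coprime_eq_sum_moebius {R : Type*} [CommRing R] {n : ℕ} (hn : n ≠ 0)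
    (s : Finset ℕ) (f : ℕ → R) :
    ∑ t ∈ s with t.Coprime n, f t = ∑ d ∈ n.divisors, (μ d : R) * ∑ t ∈ s with d ∣ t, f t := by
  simp_rw [mul_sum, sum_filter]
  rw [sum_comm]
  refine sum_congr rfl fun t _ => ?_
  rw [← sum_filter, ← sum_mul, ← Int.cast_sum, sum_moebius_filter_dvd hn]
  split_ifs <;> simp

lemma le_fl0_iff {M d s : ℕ} (hd : 0 < d) (hs : 0 < s) : s ≤ fl0 M d ↔ 2 * (d * s) < M := by
  unfold fl0
  split_ifs with h
  · obtain ⟨q, rfl⟩ := h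
    rw [Nat.mul_div_cancel_left q (by positivity), ← mul_assoc, Nat.mul_lt_mul_left (by positivity)]
    omega
  · rw [Nat.le_div_iff_mul_le (by positivity), mul_comm s, mul_assoc]
    exact ⟨fun hle => hle.lt_of_ne fun heq => h ⟨s, by rw [mul_assoc, heq]⟩, le_of_lt⟩

lemma image_mul_Icc_fl0 {M d : ℕ} (hd : 0 < d) :
    (Icc 1 (fl0 M d)).image (d * ·) = {t ∈ {t ∈ range M | 0 < t ∧ 2 * t < M} | d ∣ t} := by
  ext t
  simp only [mem_image, mem_Icc, mem_filter, mem_range]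
  constructor
  · rintro ⟨s, ⟨hs, hsM⟩, rfl⟩
    have hdsM := (le_fl0_iff hd hs).mp hsM
    exact ⟨⟨by omega, by positivity, hdsM⟩, dvd_mul_right d s⟩
  · rintro ⟨⟨-, ht, htM⟩, s, rfl⟩
    have hs : 0 < s := Nat.pos_of_mul_pos_left ht
    exact ⟨s, ⟨hs, (le_fl0_iff hd hs).mpr htM⟩, rfl⟩

lemma sum_pow_filter_dvd {R : Type*} [CommSemiring R] {M d : ℕ} (hd : 0 < d) (k : ℕ) :
    ∑ t ∈ {t ∈ {t ∈ range M | 0 < t ∧ 2 * t < M} | d ∣ t}, (t : R) ^ k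
      = (d : R) ^ k * (Sk k (fl0 M d) : R) := by
  rw [← image_mul_Icc_fl0 hd, sum_image fun _ _ _ _ h => Nat.eq_of_mul_eq_mul_left hd h, Sk,
    Nat.cast_sum, mul_sum]
  simp_rw [Nat.cast_mul, Nat.cast_pow, mul_pow]

theorem stmt_3_general (k L M : ℕ) (hL : 0 < L) :
    (Ik k L M : ℤ) =
      ∑ d ∈ (rad L).divisors,
        (ArithmeticFunction.moebius d) * (d : ℤ) ^ k * (Sk k (fl0 M d) : ℤ) := by
  have hIk : Ik k L M = ∑ t ∈ {t ∈ range M | 0 < t ∧ 2 * t < M} with t.Coprime (rad L), t ^ k := by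
    rw [Ik, filter_filter]
    refine sum_congr (filter_congr fun t _ => ?_) fun _ _ => rfl
    rw [coprime_rad_iff hL.ne', Nat.Coprime, and_assoc]
  push_cast [hIk]
  rw [sum_filter_coprime_eq_sum_moebius (rad_ne_zero L)]
  refine sum_congr rfl fun d hd => ?_
  rw [sum_pow_filter_dvd (Nat.pos_of_mem_divisors hd), Int.cast_id, mul_assoc]

theorem stmt_3 (k L M : ℕ) (hL : 0 < L) (hLM : L ∣ M) (hrad : 2 < rad L) :
    (Ik k L M : ℤ) =
      ∑ d ∈ (rad L).divisors,
        (ArithmeticFunction.moebius d) * (d : ℤ) ^ k * (Sk k (fl0 M d) : ℤ) :=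
  stmt_3_general k L M hL
end

section
/- Let N = 3^m with m ≥ 2. Then t_N = 4·3^{2m−3} − 2·3^{m−2} and ℓ_N = 2·3^{3m−4}, where t_N = I₀(N,N) + 2·Σ_{0<a<N/3} I₀(gcd(a,N), N−3a) + δ₀(N), ℓ_N = I₁(N,N) + 2·Σ_{0<a<N/3} I₁(gcd(a,N), N−3a) + δ₁(N), and δ_k(N) = 3^k·(I_k(N/3, N/3) − J_k(N/3, N/3)). -/
open Finset

/-- The quantity t_N for N divisible by 3. -/
def tNum3 (N : ℕ) : ℤ :=
  (Ik 0 N N : ℤ) + 2 * ∑ a ∈ (Finset.range N).filter (fun a => 0 < a ∧ 3 * a < N),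
    (Ik 0 (Nat.gcd a N) (N - 3 * a) : ℤ) + ((Ik 0 (N / 3) (N / 3) : ℤ) - (Jk 0 (N / 3) (N / 3) : ℤ))

/-- The quantity ℓ_N for N divisible by 3. -/
def lNum3 (N : ℕ) : ℤ :=
  (Ik 1 N N : ℤ) + 2 * ∑ a ∈ (Finset.range N).filter (fun a => 0 < a ∧ 3 * a < N),
    (Ik 1 (Nat.gcd a N) (N - 3 * a) : ℤ) +
      3 * ((Ik 1 (N / 3) (N / 3) : ℤ) - (Jk 1 (N / 3) (N / 3) : ℤ))

/-!
For `L` a positive power of `3`, the coprimality condition in `Ik k L (3 * c)` only removes the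
multiples of `3`, which contribute `3 ^ k * Ik k 1 c`. Reflecting `a ↦ N / 3 - a` writes
`N - 3 * a` as `3 * c` with `gcd (a, N)` a positive power of `3` exactly when `3 ∣ c`, and
`J_k(N/3, N/3)` is an empty sum because `3 ∣ N / 3`. Hence for `N = 3 ^ (j + 2)` both `t_N` and
`ℓ_N` are explicit combinations of `Ik k 1 M = Σ_{0 < t < M/2} t ^ k` and of the sums
`Σ_{c < 3 ^ i} Ik k 1 (3 * c)`; the latter are evaluated by induction, two values of `c` at a time.
-/

lemma Ik_one_eq_sum_range (k M : ℕ) : Ik k 1 M = ∑ t ∈ range ((M - 1) / 2), (t + 1) ^ k := by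
  symm
  refine sum_nbij' (· + 1) (· - 1) ?_ ?_ ?_ ?_ ?_ <;>
    simp +contextual [mem_filter] <;> omega

lemma Ik_zero_one (M : ℕ) : Ik 0 1 M = (M - 1) / 2 := by
  simp [Ik_one_eq_sum_range]

lemma two_mul_Ik_one_one (M : ℕ) : 2 * Ik 1 1 M = (M - 1) / 2 * ((M - 1) / 2 + 1) := by
  rw [Ik_one_eq_sum_range]
  generalize (M - 1) / 2 = h
  induction h with
  | zero => simp
  | succ h ih => rw [sum_range_succ, mul_add, ih]; ring

lemma Jk_eq_zero {k L M : ℕ} (hL : 3 ∣ L) (hM : 3 ∣ M) : Jk k L M = 0 := by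
  refine sum_eq_zero fun t ht => ?_
  simp only [mem_filter] at ht
  have h3 : 3 ∣ Nat.gcd t L := Nat.dvd_gcd (by omega) hL
  rw [ht.2.2.2.1] at h3
  norm_num at h3

lemma coprime_three_pow_iff {t i : ℕ} (hi : i ≠ 0) : Nat.Coprime t (3 ^ i) ↔ ¬ 3 ∣ t := by
  rw [Nat.coprime_pow_right_iff (Nat.pos_of_ne_zero hi), Nat.coprime_comm,
    Nat.prime_three.coprime_iff_not_dvd]

lemma Ik_three_pow_add (k i c : ℕ) (hi : i ≠ 0) :
    Ik k (3 ^ i) (3 * c) + 3 ^ k * Ik k 1 c = Ik k 1 (3 * c) := by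
  unfold Ik
  rw [mul_sum, add_comm]
  conv_rhs => rw [← sum_filter_add_sum_filter_not _ (fun t => 3 ∣ t)]
  congr 1
  · refine sum_nbij' (3 * ·) (· / 3) ?_ ?_ ?_ ?_ ?_ <;>
      simp +contextual [mem_filter, mul_pow] <;> omega
  · congr 1; ext t; simp only [mem_filter, Nat.gcd_one_right,
      coprime_three_pow_iff hi]; tauto

lemma Ik_zero_right (k L : ℕ) : Ik k L 0 = 0 := by
  simp [Ik]

lemma sum_range_mul_ite_dvd {M : Type*} [AddCommMonoid M] (f : ℕ → M) {n : ℕ} (hn : 0 < n)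
    (P : ℕ) : ∑ c ∈ range (n * P), (if n ∣ c then f c else 0) = ∑ b ∈ range P, f (n * b) := by
  rw [← sum_filter]
  refine sum_nbij' (· / n) (n * ·) ?_ ?_ ?_ ?_ ?_ <;> simp only [mem_filter, mem_range]
  · rintro c ⟨hc, b, rfl⟩; rwa [Nat.mul_div_cancel_left _ hn, ← Nat.mul_lt_mul_left hn]
  · exact fun b hb => ⟨Nat.mul_lt_mul_of_pos_left hb hn, dvd_mul_right n b⟩
  · rintro c ⟨-, b, rfl⟩; rw [Nat.mul_div_cancel_left _ hn]
  · exact fun b _ => Nat.mul_div_cancel_left _ hn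
  · rintro c ⟨-, b, rfl⟩; rw [Nat.mul_div_cancel_left _ hn]

lemma Ik_gcd_three_pow_add (k n c Q : ℕ) (hn : n ≠ 0) (hQ : 3 ∣ Q) (hc : c ≤ Q) :
    Ik k (Nat.gcd (Q - c) (3 ^ n)) (3 * c) + (if 3 ∣ c then 3 ^ k * Ik k 1 c else 0) =
      Ik k 1 (3 * c) := by
  split_ifs with h3
  · obtain ⟨i, -, hi⟩ := (Nat.dvd_prime_pow Nat.prime_three).1 (Nat.gcd_dvd_right (Q - c) (3 ^ n))
    rw [hi]
    refine Ik_three_pow_add k i c ?_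
    rintro rfl
    simpa [hi] using Nat.dvd_gcd (by omega : 3 ∣ Q - c) (dvd_pow_self 3 hn)
  · rw [(coprime_three_pow_iff hn).2 (by omega), add_zero]

lemma sum_Ik_gcd_three_pow_add (k j : ℕ) :
    ∑ a ∈ (range (3 ^ (j + 2))).filter (fun a => 0 < a ∧ 3 * a < 3 ^ (j + 2)),
        Ik k (Nat.gcd a (3 ^ (j + 2))) (3 ^ (j + 2) - 3 * a) +
      3 ^ k * ∑ b ∈ range (3 ^ j), Ik k 1 (3 * b) =
      ∑ c ∈ range (3 ^ (j + 1)), Ik k 1 (3 * c) := by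
  have hN : 3 ^ (j + 2) = 3 * 3 ^ (j + 1) := pow_succ' 3 (j + 1)
  have hQ : 3 ^ (j + 1) = 3 * 3 ^ j := pow_succ' 3 j
  have reflect : ∑ a ∈ (range (3 ^ (j + 2))).filter (fun a => 0 < a ∧ 3 * a < 3 ^ (j + 2)),
        Ik k (Nat.gcd a (3 ^ (j + 2))) (3 ^ (j + 2) - 3 * a) =
      ∑ c ∈ range (3 ^ (j + 1)), Ik k (Nat.gcd (3 ^ (j + 1) - c) (3 ^ (j + 2))) (3 * c) := by
    refine .trans ?_ (sum_filter_of_ne (p := (0 < ·)) fun c _ hc => Nat.pos_of_ne_zero ?_)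
    · refine sum_nbij' (3 ^ (j + 1) - ·) (3 ^ (j + 1) - ·) ?_ ?_ ?_ ?_ ?_ <;>
        simp only [mem_filter, mem_range] <;> intro a ha <;> first | omega | (congr 2 <;> omega)
    · rintro rfl; simp [Ik_zero_right] at hc
  have ite_sum : 3 ^ k * ∑ b ∈ range (3 ^ j), Ik k 1 (3 * b) =
      ∑ c ∈ range (3 ^ (j + 1)), (if 3 ∣ c then 3 ^ k * Ik k 1 c else 0) := by
    rw [hQ, sum_range_mul_ite_dvd (fun c => 3 ^ k * Ik k 1 c) three_pos, mul_sum]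
  rw [reflect, ite_sum, ← sum_add_distrib]
  refine sum_congr rfl fun c hc => Ik_gcd_three_pow_add k (j + 2) c _ (by omega) ⟨_, hQ⟩ ?_
  simp only [mem_range] at hc; omega

lemma sum_range_Ik_zero_one_three_mul (d : ℕ) :
    ∑ c ∈ range (2 * d + 1), Ik 0 1 (3 * c) = 3 * d ^ 2 := by
  induction d with
  | zero => simp [Ik_zero_right]
  | succ d ih =>
    rw [show 2 * (d + 1) + 1 = 2 * d + 1 + 1 + 1 by ring, sum_range_succ, sum_range_succ, ih,
      Ik_zero_one, Ik_zero_one, show (3 * (2 * d + 1) - 1) / 2 = 3 * d + 1 by omega,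
      show (3 * (2 * d + 1 + 1) - 1) / 2 = 3 * d + 2 by omega]
    ring

lemma sum_range_Ik_one_one_three_mul (d : ℕ) :
    2 * ∑ c ∈ range (2 * d + 1), Ik 1 1 (3 * c) + d = 6 * d ^ 3 + 3 * d ^ 2 := by
  induction d with
  | zero => simp [Ik_zero_right]
  | succ d ih =>
    rw [show 2 * (d + 1) + 1 = 2 * d + 1 + 1 + 1 by ring, sum_range_succ, sum_range_succ,
      mul_add, mul_add, two_mul_Ik_one_one, two_mul_Ik_one_one,
      show (3 * (2 * d + 1) - 1) / 2 = 3 * d + 1 by omega,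
      show (3 * (2 * d + 1 + 1) - 1) / 2 = 3 * d + 2 by omega]
    linarith

lemma Ik_three_pow_self_add (k i : ℕ) :
    Ik k (3 ^ (i + 1)) (3 ^ (i + 1)) + 3 ^ k * Ik k 1 (3 ^ i) = Ik k 1 (3 ^ (i + 1)) := by
  have h := Ik_three_pow_add k (i + 1) (3 ^ i) (Nat.succ_ne_zero i)
  rwa [← pow_succ'] at h

def momentNum3 (k N : ℕ) : ℤ :=
  (Ik k N N : ℤ) + 2 * ∑ a ∈ (Finset.range N).filter (fun a => 0 < a ∧ 3 * a < N),
    (Ik k (Nat.gcd a N) (N - 3 * a) : ℤ) +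
      3 ^ k * ((Ik k (N / 3) (N / 3) : ℤ) - (Jk k (N / 3) (N / 3) : ℤ))

lemma tNum3_eq_momentNum3 (N : ℕ) : tNum3 N = momentNum3 0 N := by
  simp [tNum3, momentNum3]

lemma lNum3_eq_momentNum3 (N : ℕ) : lNum3 N = momentNum3 1 N := by
  simp [lNum3, momentNum3]

lemma momentNum3_three_pow {j d : ℕ} (k : ℕ) (hd : 3 ^ j = 2 * d + 1) :
    momentNum3 k (3 ^ (j + 2)) = Ik k 1 (2 * (9 * d + 4) + 1) - 9 ^ k * Ik k 1 (2 * d + 1) +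
      2 * ∑ c ∈ range (2 * (3 * d + 1) + 1), (Ik k 1 (3 * c) : ℤ) -
      2 * 3 ^ k * ∑ c ∈ range (2 * d + 1), (Ik k 1 (3 * c) : ℤ) := by
  have hQ : 3 ^ (j + 1) = 2 * (3 * d + 1) + 1 := by rw [pow_succ, hd]; ring
  have hN : 3 ^ (j + 2) = 2 * (9 * d + 4) + 1 := by rw [pow_succ, hQ]; ring
  have hdiv : 3 ^ (j + 2) / 3 = 3 ^ (j + 1) := by rw [pow_succ, Nat.mul_div_cancel _ three_pos]
  have hIN := congrArg ((↑) : ℕ → ℤ) (Ik_three_pow_self_add k (j + 1))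
  have hIQ := congrArg ((↑) : ℕ → ℤ) (Ik_three_pow_self_add k j)
  have hsum := congrArg ((↑) : ℕ → ℤ) (sum_Ik_gcd_three_pow_add k j)
  push_cast at hIN hIQ hsum
  rw [momentNum3, hdiv, Jk_eq_zero (dvd_pow_self 3 j.succ_ne_zero) (dvd_pow_self 3 j.succ_ne_zero),
    show (9 : ℤ) ^ k = 3 ^ k * 3 ^ k by rw [← mul_pow]; norm_num, ← hN, ← hQ, ← hd]
  linear_combination hIN + 2 * hsum + 3 ^ k * hIQ

lemma tNum3_three_pow (j : ℕ) : tNum3 (3 ^ (j + 2)) = 4 * 3 ^ (2 * j + 1) - 2 * 3 ^ j := by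
  obtain ⟨d, hd⟩ : Odd (3 ^ j) := Odd.pow (by decide)
  have hGQ := sum_range_Ik_zero_one_three_mul (3 * d + 1)
  have hGP := sum_range_Ik_zero_one_three_mul d
  have hd' : (3 : ℤ) ^ j = 2 * d + 1 := by exact_mod_cast hd
  rw [pow_succ (3 : ℤ), pow_mul', hd', tNum3_eq_momentNum3, momentNum3_three_pow 0 hd,
    Ik_zero_one, Ik_zero_one]
  simp only [Nat.add_sub_cancel, Nat.mul_div_cancel_left _ two_pos]
  zify at hGQ hGP
  push_cast
  linarith

lemma lNum3_three_pow (j : ℕ) : lNum3 (3 ^ (j + 2)) = 2 * 3 ^ (3 * j + 2) := by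
  obtain ⟨d, hd⟩ : Odd (3 ^ j) := Odd.pow (by decide)
  have hIN := two_mul_Ik_one_one (2 * (9 * d + 4) + 1)
  have hIP := two_mul_Ik_one_one (2 * d + 1)
  have hGQ := sum_range_Ik_one_one_three_mul (3 * d + 1)
  have hGP := sum_range_Ik_one_one_three_mul d
  have hd' : (3 : ℤ) ^ j = 2 * d + 1 := by exact_mod_cast hd
  simp only [Nat.add_sub_cancel, Nat.mul_div_cancel_left _ two_pos] at hIN hIP
  rw [pow_add (3 : ℤ), pow_mul', hd', lNum3_eq_momentNum3, momentNum3_three_pow 1 hd]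
  zify at hIN hIP hGQ hGP
  linarith

theorem stmt_11 (m : ℕ) (hm : 2 ≤ m) :
    tNum3 (3 ^ m) = 4 * 3 ^ (2 * m - 3) - 2 * 3 ^ (m - 2) ∧
    lNum3 (3 ^ m) = 2 * 3 ^ (3 * m - 4) := by
  obtain ⟨j, rfl⟩ := Nat.exists_eq_add_of_le' hm
  rw [show 2 * (j + 2) - 3 = 2 * j + 1 by omega, show j + 2 - 2 = j by omega,
    show 3 * (j + 2) - 4 = 3 * j + 2 by omega]
  exact ⟨tNum3_three_pow j, lNum3_three_pow j⟩
end
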